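/- Let C₂ > 0, C₄ > 0, and θ ∈ (0, 1/(C₂(1+C₄))). Suppose nonnegative reals satisfy: (i) reliability η ≤ C₂ · e_k (where e_k denotes total error plus oscillation on mesh k), (ii) localized upper bound d ≤ C₄ η_R (discrete difference bounded by estimator on refined set), (iii) triangle inequalities e_k ≤ d + e_T and osc_k ≤ osc_R + osc_T with osc_R ≤ η_R, and (iv) e_T + osc_T ≤ (1 - θC₂(1+C₄)) (e_k + osc_k). Then η_R ≥ θ η, i.e., θ(C₄+1)η ≤ (1+C₄)η_R. -/
import Mathlib


theorem stmt_15 (C₂ C₄ θ η ηR ek eT osck oscT oscR dd : ℝ)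
    (hC₂ : 0 < C₂) (hC₄ : 0 < C₄)
    (hθ0 : 0 < θ) (hθ : θ < 1 / (C₂ * (1 + C₄)))
    (hη : 0 ≤ η) (hηR : 0 ≤ ηR) (hek : 0 ≤ ek) (heT : 0 ≤ eT)
    (hosck : 0 ≤ osck) (hoscT : 0 ≤ oscT) (hoscR : 0 ≤ oscR) (hdd : 0 ≤ dd)
    (hrel : η ≤ C₂ * (ek + osck))
    (hloc : dd ≤ C₄ * ηR)
    (htri : ek ≤ dd + eT) (htri2 : osck ≤ oscR + oscT) (hoscRη : oscR ≤ ηR)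
    (hreduce : eT + oscT ≤ (1 - θ * C₂ * (1 + C₄)) * (ek + osck)) :
    θ * (C₄ + 1) * η ≤ (1 + C₄) * ηR ∧ θ * η ≤ ηR := by
  have key : θ * C₂ * (1 + C₄) * (ek + osck) ≤ (1 + C₄) * ηR := by nlinarith
  have h2 : θ * η ≤ ηR := by nlinarith [mul_le_mul_of_nonneg_left hrel hθ0.le, key, mul_pos hθ0 hC₂]
  exact ⟨by nlinarith, h2⟩
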